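/- arXiv:1309.7421 — 2 statements merged into one kernel-verified Lean document; each statement's English description precedes it below -/
import Mathlib

section
/- Time-derivative estimate for the regularized non-degenerate problem (estimate (3.5) in proof of Theorem 3.1): Let ε ∈ (0,1) and a_ε(x) = a(x) + ε. Let q : [0,l] → ℝ be continuous with q ≥ 0, f : Q̄ → ℝ continuous, and φ ∈ C¹[0,l] with φ(0) = φ(l) = 0. Let u be continuous on Q̄ = [0,l] × [0,T] with u_t, u_x, u_{xx} and the mixed derivative u_{xt} continuous on Q̄, satisfying u_t − (a_ε(x)u_x)_x + q(x)u = f(x,t) on Q̄, u(0,t) = u(l,t) = 0 for t ∈ [0,T], and u(x,0) = φ(x) for x ∈ [0,l]. Then ∫₀^T∫₀^l |u_t(x,t)|² dx dt ≤ ∫₀^l a_ε(x) φ'(x)² dx + ∫₀^l q(x) φ(x)² dx + ∫₀^T∫₀^l f(x,t)² dx dt. -/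
/-!
Multiply the equation by `u_t` and integrate in `x`. Since `u_t` vanishes at `x = 0, l` and
`∂ₓ u_t = u_xt`, the integrand `u_t² + a_ε u_x u_xt + q u u_t - f u_t` is the `x`-derivative of
`a_ε u_x u_t` and integrates to zero; with `2 f u_t ≤ f² + u_t²` this gives
`∫ u_t² dx ≤ ∫ f² dx - d/dt ∫ (a_ε u_x² + q u²) dx`. Integrating in `t` and dropping the
nonnegative energy at time `T` leaves the energy at time `0`, which is `∫ a_ε φ'² + ∫ q φ²`.

The equality of mixed partials `∂ₓ u_t = u_xt` comes from writing
`u(x,t) - u(0,t) = ∫₀ˣ u_x(y,0) dy + ∫₀ᵗ ∫₀ˣ u_xt(y,s) dy ds` (Fubini) and differentiating in `t`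
and then in `x`.
-/

open Set MeasureTheory intervalIntegral Function

section Calculus

variable {f f' : ℝ → ℝ} {a b x : ℝ}

theorem integral_eq_sub_of_hasDerivWithinAt_Icc (hab : a ≤ b)
    (hf : ∀ x ∈ Icc a b, HasDerivWithinAt f (f' x) (Icc a b) x)
    (hf' : ContinuousOn f' (Icc a b)) :
    ∫ x in a..b, f' x = f b - f a :=
  integral_eq_sub_of_hasDeriv_right_of_le hab (fun x hx => (hf x hx).continuousWithinAt)
    (fun x hx => ((hf x (Ioo_subset_Icc_self hx)).hasDerivAt
      (Icc_mem_nhds hx.1 hx.2)).hasDerivWithinAt)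
    (hf'.intervalIntegrable_of_Icc hab)

theorem hasDerivWithinAt_integral_Icc (hf : ContinuousOn f (Icc a b)) (hx : x ∈ Icc a b) :
    HasDerivWithinAt (fun y => ∫ s in a..y, f s) (f x) (Icc a b) x := by
  have : Fact (x ∈ Icc a b) := ⟨hx⟩
  exact integral_hasDerivWithinAt_right
    ((hf.mono (uIcc_subset_Icc ⟨le_rfl, hx.1.trans hx.2⟩ hx)).intervalIntegrable)
    (hf.stronglyMeasurableAtFilter_nhdsWithin measurableSet_Icc x) (hf x hx)

end Calculus

section Rectangle

variable {g h : ℝ → ℝ → ℝ} {a b c d : ℝ}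

theorem continuousOn_intervalIntegral_of_continuousOn_prod (hab : a ≤ b) (hcd : c ≤ d)
    (hg : ContinuousOn (uncurry g) (Icc a b ×ˢ Icc c d)) :
    ContinuousOn (fun t => ∫ x in a..b, g x t) (Icc c d) := by
  set G : ℝ → ℝ → ℝ := fun t x => g (projIcc a b hab x) (projIcc c d hcd t)
  have hG : Continuous (uncurry G) :=
    hg.comp_continuous
      (f := fun p : ℝ × ℝ => ((projIcc a b hab p.2 : ℝ), (projIcc c d hcd p.1 : ℝ)))
      (by fun_prop) fun p => ⟨(projIcc a b hab p.2).2, (projIcc c d hcd p.1).2⟩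
  refine (continuous_parametric_intervalIntegral_of_continuous' hG a b).continuousOn.congr
    fun t ht => integral_congr fun x hx => ?_
  rw [uIcc_of_le hab] at hx
  simp [G, projIcc_of_mem, hx, ht]

theorem intervalIntegral_integral_swap_of_continuousOn (hab : a ≤ b) (hcd : c ≤ d)
    (hg : ContinuousOn (uncurry g) (Icc a b ×ˢ Icc c d)) :
    ∫ t in c..d, ∫ x in a..b, g x t = ∫ x in a..b, ∫ t in c..d, g x t := by
  refine (intervalIntegral_intervalIntegral_swap ?_).symm
  rw [uIoc_of_le hab, uIoc_of_le hcd]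
  exact (hg.integrableOn_compact (isCompact_Icc.prod isCompact_Icc)).mono_set
    (prod_mono Ioc_subset_Icc_self Ioc_subset_Icc_self)

theorem intervalIntegral_integral_sub_of_continuousOn (hab : a ≤ b) (hcd : c ≤ d)
    (hg : ContinuousOn (uncurry g) (Icc a b ×ˢ Icc c d))
    (hh : ContinuousOn (uncurry h) (Icc a b ×ˢ Icc c d)) :
    ∫ t in c..d, ∫ x in a..b, (g x t - h x t) =
      (∫ t in c..d, ∫ x in a..b, g x t) - ∫ t in c..d, ∫ x in a..b, h x t := by
  rw [← integral_sub
    ((continuousOn_intervalIntegral_of_continuousOn_prod hab hcd hg).intervalIntegrable_of_Icc hcd)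
    ((continuousOn_intervalIntegral_of_continuousOn_prod hab hcd hh).intervalIntegrable_of_Icc hcd)]
  refine integral_congr fun t ht => ?_
  rw [uIcc_of_le hcd] at ht
  exact integral_sub ((hg.uncurry_right t ht).intervalIntegrable_of_Icc hab)
    ((hh.uncurry_right t ht).intervalIntegrable_of_Icc hab)

theorem intervalIntegral_integral_mono_on (hab : a ≤ b) (hcd : c ≤ d)
    (hg : ContinuousOn (uncurry g) (Icc a b ×ˢ Icc c d))
    (hh : ContinuousOn (uncurry h) (Icc a b ×ˢ Icc c d))
    (hle : ∀ t ∈ Icc c d, ∫ x in a..b, g x t ≤ ∫ x in a..b, h x t) :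
    ∫ t in c..d, ∫ x in a..b, g x t ≤ ∫ t in c..d, ∫ x in a..b, h x t :=
  integral_mono_on hcd
    ((continuousOn_intervalIntegral_of_continuousOn_prod hab hcd hg).intervalIntegrable_of_Icc hcd)
    ((continuousOn_intervalIntegral_of_continuousOn_prod hab hcd hh).intervalIntegrable_of_Icc hcd)
    hle

theorem integral_integral_deriv_eq_integral_sub {E E' : ℝ → ℝ → ℝ} (hab : a ≤ b) (hcd : c ≤ d)
    (hE : ∀ x ∈ Icc a b, ∀ t ∈ Icc c d, HasDerivWithinAt (E x ·) (E' x t) (Icc c d) t)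
    (hE' : ContinuousOn (uncurry E') (Icc a b ×ˢ Icc c d)) :
    ∫ t in c..d, ∫ x in a..b, E' x t = ∫ x in a..b, (E x d - E x c) := by
  rw [intervalIntegral_integral_swap_of_continuousOn hab hcd hE']
  refine integral_congr fun x hx => ?_
  rw [uIcc_of_le hab] at hx
  exact integral_eq_sub_of_hasDerivWithinAt_Icc hcd (hE x hx) (hE'.uncurry_left x hx)

end Rectangle

section MixedPartial

variable {u ut ux uxt : ℝ → ℝ → ℝ} {a b c d : ℝ}

theorem sub_eq_integral_of_mixed_partial (hcd : c < d)
    (hux : ∀ x ∈ Icc a b, ∀ t ∈ Icc c d, HasDerivWithinAt (u · t) (ux x t) (Icc a b) x)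
    (hut : ∀ x ∈ Icc a b, ∀ t ∈ Icc c d, HasDerivWithinAt (u x ·) (ut x t) (Icc c d) t)
    (huxt : ∀ x ∈ Icc a b, ∀ t ∈ Icc c d, HasDerivWithinAt (ux x ·) (uxt x t) (Icc c d) t)
    (huxc : ContinuousOn (uncurry ux) (Icc a b ×ˢ Icc c d))
    (huxtc : ContinuousOn (uncurry uxt) (Icc a b ×ˢ Icc c d))
    {x t : ℝ} (hx : x ∈ Icc a b) (ht : t ∈ Icc c d) :
    ut x t - ut a t = ∫ y in a..x, uxt y t := by
  have hxsub : Icc a x ⊆ Icc a b := Icc_subset_Icc_right hx.2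
  have hc : c ∈ Icc c d := left_mem_Icc.2 hcd.le
  have hrepr : ∀ τ ∈ Icc c d,
      u x τ - u a τ = (∫ y in a..x, ux y c) + ∫ s in c..τ, ∫ y in a..x, uxt y s := by
    intro τ hτ
    have hτsub : Icc c τ ⊆ Icc c d := Icc_subset_Icc_right hτ.2
    rw [← sub_eq_iff_eq_add', intervalIntegral_integral_swap_of_continuousOn hx.1 hτ.1
      (huxtc.mono (prod_mono hxsub hτsub)), ← integral_eq_sub_of_hasDerivWithinAt_Icc hx.1
        (fun y hy => (hux y (hxsub hy) τ hτ).mono hxsub) ((huxc.uncurry_right τ hτ).mono hxsub),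
      ← intervalIntegral.integral_sub
        (((huxc.uncurry_right τ hτ).mono hxsub).intervalIntegrable_of_Icc hx.1)
        (((huxc.uncurry_right c hc).mono hxsub).intervalIntegrable_of_Icc hx.1)]
    refine integral_congr fun y hy => ?_
    rw [uIcc_of_le hx.1] at hy
    exact (integral_eq_sub_of_hasDerivWithinAt_Icc hτ.1
      (fun s hs => (huxt y (hxsub hy) s (hτsub hs)).mono hτsub)
      ((huxtc.uncurry_left y (hxsub hy)).mono hτsub)).symm
  have hderiv : HasDerivWithinAt (fun τ => u x τ - u a τ) (∫ y in a..x, uxt y t) (Icc c d) t :=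
    ((hasDerivWithinAt_integral_Icc (continuousOn_intervalIntegral_of_continuousOn_prod hx.1
      hcd.le (huxtc.mono (prod_mono hxsub subset_rfl))) ht).const_add _).congr hrepr (hrepr t ht)
  exact (uniqueDiffOn_Icc hcd t ht).eq_deriv _
    ((hut x hx t ht).sub (hut a ⟨le_rfl, hx.1.trans hx.2⟩ t ht)) hderiv

theorem hasDerivWithinAt_of_mixed_partial (hcd : c < d)
    (hux : ∀ x ∈ Icc a b, ∀ t ∈ Icc c d, HasDerivWithinAt (u · t) (ux x t) (Icc a b) x)
    (hut : ∀ x ∈ Icc a b, ∀ t ∈ Icc c d, HasDerivWithinAt (u x ·) (ut x t) (Icc c d) t)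
    (huxt : ∀ x ∈ Icc a b, ∀ t ∈ Icc c d, HasDerivWithinAt (ux x ·) (uxt x t) (Icc c d) t)
    (huxc : ContinuousOn (uncurry ux) (Icc a b ×ˢ Icc c d))
    (huxtc : ContinuousOn (uncurry uxt) (Icc a b ×ˢ Icc c d))
    {x t : ℝ} (hx : x ∈ Icc a b) (ht : t ∈ Icc c d) :
    HasDerivWithinAt (ut · t) (uxt x t) (Icc a b) x := by
  have hrepr : ∀ y ∈ Icc a b, ut y t = ut a t + ∫ s in a..y, uxt s t := fun y hy => by
    rw [← sub_eq_integral_of_mixed_partial hcd hux hut huxt huxc huxtc hy ht]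
    ring
  exact ((hasDerivWithinAt_integral_Icc (huxtc.uncurry_right t ht) hx).const_add _).congr
    hrepr (hrepr x hx)

end MixedPartial

theorem integral_sq_le_of_divergence_form_eq {A A' v v' w w' q z F : ℝ → ℝ} {a b : ℝ}
    (hab : a ≤ b)
    (hA : ∀ x ∈ Icc a b, HasDerivWithinAt A (A' x) (Icc a b) x)
    (hv : ∀ x ∈ Icc a b, HasDerivWithinAt v (v' x) (Icc a b) x)
    (hw : ∀ x ∈ Icc a b, HasDerivWithinAt w (w' x) (Icc a b) x)
    (hA'c : ContinuousOn A' (Icc a b)) (hv'c : ContinuousOn v' (Icc a b))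
    (hw'c : ContinuousOn w' (Icc a b)) (hqc : ContinuousOn q (Icc a b))
    (hzc : ContinuousOn z (Icc a b)) (hFc : ContinuousOn F (Icc a b))
    (hwa : w a = 0) (hwb : w b = 0)
    (heq : ∀ x ∈ Icc a b, w x - (A x * v' x + A' x * v x) + q x * z x = F x) :
    ∫ x in a..b, w x ^ 2 ≤ ∫ x in a..b, (F x ^ 2 - 2 * (A x * v x * w' x + q x * z x * w x)) := by
  have hAc : ContinuousOn A (Icc a b) := fun x hx => (hA x hx).continuousWithinAt
  have hvc : ContinuousOn v (Icc a b) := fun x hx => (hv x hx).continuousWithinAt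
  have hwc : ContinuousOn w (Icc a b) := fun x hx => (hw x hx).continuousWithinAt
  have hi : ∀ s : ℝ → ℝ, ContinuousOn s (Icc a b) → IntervalIntegrable s volume a b :=
    fun s hs => hs.intervalIntegrable_of_Icc hab
  have hflux : ∫ x in a..b, ((A' x * v x + A x * v' x) * w x + A x * v x * w' x) = 0 := by
    rw [integral_eq_sub_of_hasDerivWithinAt_Icc (f := fun x => A x * v x * w x)
      (f' := fun x => (A' x * v x + A x * v' x) * w x + A x * v x * w' x) hab
      (fun x hx => ((hA x hx).mul (hv x hx)).mul (hw x hx)) (by fun_prop), hwa, hwb]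
    ring
  calc ∫ x in a..b, w x ^ 2
      ≤ ∫ x in a..b, ((F x ^ 2 - 2 * (A x * v x * w' x + q x * z x * w x)) +
          2 * ((A' x * v x + A x * v' x) * w x + A x * v x * w' x)) := by
        refine integral_mono_on hab (hi _ (by fun_prop)) (hi _ (by fun_prop)) fun x hx => ?_
        rw [show A' x * v x + A x * v' x = w x + q x * z x - F x by linarith [heq x hx]]
        nlinarith [sq_nonneg (F x - w x)]
    _ = ∫ x in a..b, (F x ^ 2 - 2 * (A x * v x * w' x + q x * z x * w x)) := by
        rw [integral_add (hi _ (by fun_prop)) (hi _ (by fun_prop)),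
          intervalIntegral.integral_const_mul, hflux, mul_zero, add_zero]

theorem integral_integral_sq_le_of_energy_inequality {A q : ℝ → ℝ} {v vt z zt F : ℝ → ℝ → ℝ}
    {a b c d : ℝ} (hab : a ≤ b) (hcd : c ≤ d)
    (hAc : ContinuousOn A (Icc a b)) (hqc : ContinuousOn q (Icc a b))
    (hA : ∀ x ∈ Icc a b, 0 ≤ A x) (hq : ∀ x ∈ Icc a b, 0 ≤ q x)
    (hv : ∀ x ∈ Icc a b, ∀ t ∈ Icc c d, HasDerivWithinAt (v x ·) (vt x t) (Icc c d) t)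
    (hz : ∀ x ∈ Icc a b, ∀ t ∈ Icc c d, HasDerivWithinAt (z x ·) (zt x t) (Icc c d) t)
    (hvc : ContinuousOn (uncurry v) (Icc a b ×ˢ Icc c d))
    (hvtc : ContinuousOn (uncurry vt) (Icc a b ×ˢ Icc c d))
    (hzc : ContinuousOn (uncurry z) (Icc a b ×ˢ Icc c d))
    (hztc : ContinuousOn (uncurry zt) (Icc a b ×ˢ Icc c d))
    (hFc : ContinuousOn (uncurry F) (Icc a b ×ˢ Icc c d))
    (hslice : ∀ t ∈ Icc c d, ∫ x in a..b, zt x t ^ 2 ≤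
      ∫ x in a..b, (F x t ^ 2 - 2 * (A x * v x t * vt x t + q x * z x t * zt x t))) :
    ∫ t in c..d, ∫ x in a..b, zt x t ^ 2 ≤
      (∫ x in a..b, A x * v x c ^ 2) + (∫ x in a..b, q x * z x c ^ 2) +
        ∫ t in c..d, ∫ x in a..b, F x t ^ 2 := by
  have hE : ∀ x ∈ Icc a b, ∀ t ∈ Icc c d,
      HasDerivWithinAt (fun τ => A x * v x τ ^ 2 + q x * z x τ ^ 2)
        (2 * (A x * v x t * vt x t + q x * z x t * zt x t)) (Icc c d) t :=
    fun x hx t ht => ((((hv x hx t ht).pow 2).const_mul (A x)).add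
      (((hz x hx t ht).pow 2).const_mul (q x))).congr_deriv (by ring)
  have hE'c : ContinuousOn (uncurry fun x t => 2 * (A x * v x t * vt x t + q x * z x t * zt x t))
      (Icc a b ×ˢ Icc c d) :=
    continuousOn_const.mul ((((hAc.comp continuousOn_fst fun p hp => hp.1).mul hvc).mul hvtc).add
      (((hqc.comp continuousOn_fst fun p hp => hp.1).mul hzc).mul hztc))
  have hF2 : ContinuousOn (uncurry fun x t => F x t ^ 2) (Icc a b ×ˢ Icc c d) := hFc.pow 2
  have hzt2 : ContinuousOn (uncurry fun x t => zt x t ^ 2) (Icc a b ×ˢ Icc c d) := hztc.pow 2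
  have hv_init := hvc.uncurry_right c (left_mem_Icc.2 hcd)
  have hv_final := hvc.uncurry_right d (right_mem_Icc.2 hcd)
  have hz_init := hzc.uncurry_right c (left_mem_Icc.2 hcd)
  have hz_final := hzc.uncurry_right d (right_mem_Icc.2 hcd)
  have hi : ∀ s : ℝ → ℝ, ContinuousOn s (Icc a b) → IntervalIntegrable s volume a b :=
    fun s hs => hs.intervalIntegrable_of_Icc hab
  have hterminal : 0 ≤ ∫ x in a..b, (A x * v x d ^ 2 + q x * z x d ^ 2) :=
    integral_nonneg hab fun x hx =>
      add_nonneg (mul_nonneg (hA x hx) (sq_nonneg _)) (mul_nonneg (hq x hx) (sq_nonneg _))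
  calc ∫ t in c..d, ∫ x in a..b, zt x t ^ 2
      ≤ ∫ t in c..d, ∫ x in a..b,
          (F x t ^ 2 - 2 * (A x * v x t * vt x t + q x * z x t * zt x t)) :=
        intervalIntegral_integral_mono_on hab hcd hzt2 ((hF2.sub hE'c).congr fun _ _ => rfl)
          hslice
    _ = (∫ t in c..d, ∫ x in a..b, F x t ^ 2) -
          ((∫ x in a..b, (A x * v x d ^ 2 + q x * z x d ^ 2)) -
            ((∫ x in a..b, A x * v x c ^ 2) + ∫ x in a..b, q x * z x c ^ 2)) := by
        rw [intervalIntegral_integral_sub_of_continuousOn hab hcd hF2 hE'c,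
          integral_integral_deriv_eq_integral_sub hab hcd hE hE'c,
          intervalIntegral.integral_sub (hi _ (by fun_prop)) (hi _ (by fun_prop)),
          intervalIntegral.integral_add (f := fun x => A x * v x c ^ 2) (hi _ (by fun_prop))
            (hi _ (by fun_prop))]
    _ ≤ _ := by linarith

theorem regularized_time_derivative_estimate_general
    (l T ε : ℝ) (hl : 0 < l) (hT : 0 < T) (hε : ε ∈ Ioo (0:ℝ) 1)
    (a a' : ℝ → ℝ)
    (ha : ∀ x ∈ Icc (0:ℝ) l, HasDerivWithinAt a (a' x) (Icc (0:ℝ) l) x)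
    (ha'c : ContinuousOn a' (Icc (0:ℝ) l))
    (hapos : ∀ x ∈ Ioo (0:ℝ) l, 0 < a x)
    (q : ℝ → ℝ) (hqc : ContinuousOn q (Icc (0:ℝ) l)) (hqn : ∀ x ∈ Icc (0:ℝ) l, 0 ≤ q x)
    (f : ℝ → ℝ → ℝ)
    (hfc : ContinuousOn (fun p : ℝ × ℝ => f p.1 p.2) (Icc (0:ℝ) l ×ˢ Icc (0:ℝ) T))
    (φ φ' : ℝ → ℝ)
    (hφ : ∀ x ∈ Icc (0:ℝ) l, HasDerivWithinAt φ (φ' x) (Icc (0:ℝ) l) x)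
    (u ut ux uxx uxt : ℝ → ℝ → ℝ)
    (hu : ContinuousOn (fun p : ℝ × ℝ => u p.1 p.2) (Icc (0:ℝ) l ×ˢ Icc (0:ℝ) T))
    (hutc : ContinuousOn (fun p : ℝ × ℝ => ut p.1 p.2) (Icc (0:ℝ) l ×ˢ Icc (0:ℝ) T))
    (huxc : ContinuousOn (fun p : ℝ × ℝ => ux p.1 p.2) (Icc (0:ℝ) l ×ˢ Icc (0:ℝ) T))
    (huxxc : ContinuousOn (fun p : ℝ × ℝ => uxx p.1 p.2) (Icc (0:ℝ) l ×ˢ Icc (0:ℝ) T))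
    (huxtc : ContinuousOn (fun p : ℝ × ℝ => uxt p.1 p.2) (Icc (0:ℝ) l ×ˢ Icc (0:ℝ) T))
    (hut : ∀ x ∈ Icc (0:ℝ) l, ∀ t ∈ Icc (0:ℝ) T,
      HasDerivWithinAt (fun τ => u x τ) (ut x t) (Icc (0:ℝ) T) t)
    (hux : ∀ x ∈ Icc (0:ℝ) l, ∀ t ∈ Icc (0:ℝ) T,
      HasDerivWithinAt (fun s => u s t) (ux x t) (Icc (0:ℝ) l) x)
    (huxx : ∀ x ∈ Icc (0:ℝ) l, ∀ t ∈ Icc (0:ℝ) T,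
      HasDerivWithinAt (fun s => ux s t) (uxx x t) (Icc (0:ℝ) l) x)
    (huxt : ∀ x ∈ Icc (0:ℝ) l, ∀ t ∈ Icc (0:ℝ) T,
      HasDerivWithinAt (fun τ => ux x τ) (uxt x t) (Icc (0:ℝ) T) t)
    (hL : ∀ x ∈ Icc (0:ℝ) l, ∀ t ∈ Icc (0:ℝ) T,
      ut x t - ((a x + ε) * uxx x t + a' x * ux x t) + q x * u x t = f x t)
    (hbc : ∀ t ∈ Icc (0:ℝ) T, u 0 t = 0 ∧ u l t = 0)
    (hinit : ∀ x ∈ Icc (0:ℝ) l, u x 0 = φ x) :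
    (∫ t in (0:ℝ)..T, ∫ x in (0:ℝ)..l, (ut x t) ^ 2)
      ≤ (∫ x in (0:ℝ)..l, (a x + ε) * (φ' x) ^ 2) + (∫ x in (0:ℝ)..l, q x * (φ x) ^ 2) +
        ∫ t in (0:ℝ)..T, ∫ x in (0:ℝ)..l, (f x t) ^ 2 := by
  have hac : ContinuousOn a (Icc 0 l) := fun x hx => (ha x hx).continuousWithinAt
  have hAnn : ∀ x ∈ Icc 0 l, 0 ≤ a x + ε := fun x hx =>
    add_nonneg (ContinuousWithinAt.closure_le (by rwa [closure_Ioo hl.ne]) continuousWithinAt_const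
      ((hac x hx).mono Ioo_subset_Icc_self) fun y hy => (hapos y hy).le) hε.1.le
  have hut_lateral : ∀ x ∈ Icc 0 l, (∀ t ∈ Icc 0 T, u x t = 0) → ∀ t ∈ Icc 0 T, ut x t = 0 :=
    fun x hx hx0 t ht => (uniqueDiffOn_Icc hT t ht).eq_deriv _ (hut x hx t ht)
      ((hasDerivWithinAt_const t _ 0).congr hx0 (hx0 t ht))
  have hut0 : ∀ t ∈ Icc 0 T, ut 0 t = 0 :=
    hut_lateral 0 (left_mem_Icc.2 hl.le) fun τ hτ => (hbc τ hτ).1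
  have hutl : ∀ t ∈ Icc 0 T, ut l t = 0 :=
    hut_lateral l (right_mem_Icc.2 hl.le) fun τ hτ => (hbc τ hτ).2
  have hux_init : ∀ x ∈ Icc 0 l, ux x 0 = φ' x := fun x hx =>
    (uniqueDiffOn_Icc hl x hx).eq_deriv _ (hux x hx 0 (left_mem_Icc.2 hT.le))
      ((hφ x hx).congr hinit (hinit x hx))
  have hslice : ∀ t ∈ Icc 0 T, ∫ x in 0..l, ut x t ^ 2 ≤ ∫ x in 0..l,
      (f x t ^ 2 - 2 * ((a x + ε) * ux x t * uxt x t + q x * u x t * ut x t)) := fun t ht =>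
    integral_sq_le_of_divergence_form_eq hl.le (fun x hx => (ha x hx).add_const ε)
      (huxx · · t ht)
      (fun x hx => hasDerivWithinAt_of_mixed_partial hT hux hut huxt huxc huxtc hx ht)
      ha'c (huxxc.uncurry_right t ht) (huxtc.uncurry_right t ht) hqc (hu.uncurry_right t ht)
      (hfc.uncurry_right t ht) (hut0 t ht) (hutl t ht) (hL · · t ht)
  have hinit_energy_a : ∫ x in 0..l, (a x + ε) * ux x 0 ^ 2 = ∫ x in 0..l, (a x + ε) * φ' x ^ 2 :=
    integral_congr fun x hx => by simp only [hux_init x (uIcc_of_le hl.le ▸ hx)]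
  have hinit_energy_q : ∫ x in 0..l, q x * u x 0 ^ 2 = ∫ x in 0..l, q x * φ x ^ 2 :=
    integral_congr fun x hx => by simp only [hinit x (uIcc_of_le hl.le ▸ hx)]
  calc (∫ t in 0..T, ∫ x in 0..l, ut x t ^ 2)
      ≤ (∫ x in 0..l, (a x + ε) * ux x 0 ^ 2) + (∫ x in 0..l, q x * u x 0 ^ 2) +
          ∫ t in 0..T, ∫ x in 0..l, f x t ^ 2 :=
        integral_integral_sq_le_of_energy_inequality hl.le hT.le (hac.add continuousOn_const) hqc
          hAnn hqn huxt hut huxc huxtc hu hutc hfc hslice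
    _ = _ := by rw [hinit_energy_a, hinit_energy_q]

/-- Time-derivative estimate (3.5) for the regularized non-degenerate problem (proof of
Theorem 3.1): a classical solution of the regularized initial-boundary value problem with
`φ ∈ C¹[0,l]`, `φ(0) = φ(l) = 0`, satisfies
`∫₀^T∫₀^l u_t² dx dt ≤ ∫₀^l a_ε φ'² dx + ∫₀^l q φ² dx + ∫₀^T∫₀^l f² dx dt`. -/
theorem regularized_time_derivative_estimate
    (l T ε : ℝ) (hl : 0 < l) (hT : 0 < T) (hε : ε ∈ Ioo (0:ℝ) 1)
    (a a' : ℝ → ℝ)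
    (ha : ∀ x ∈ Icc (0:ℝ) l, HasDerivWithinAt a (a' x) (Icc (0:ℝ) l) x)
    (ha'c : ContinuousOn a' (Icc (0:ℝ) l))
    (ha0 : a 0 = 0) (hal : a l = 0)
    (hapos : ∀ x ∈ Ioo (0:ℝ) l, 0 < a x)
    (q : ℝ → ℝ) (hqc : ContinuousOn q (Icc (0:ℝ) l)) (hqn : ∀ x ∈ Icc (0:ℝ) l, 0 ≤ q x)
    (f : ℝ → ℝ → ℝ)
    (hfc : ContinuousOn (fun p : ℝ × ℝ => f p.1 p.2) (Icc (0:ℝ) l ×ˢ Icc (0:ℝ) T))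
    (φ φ' : ℝ → ℝ)
    (hφ : ∀ x ∈ Icc (0:ℝ) l, HasDerivWithinAt φ (φ' x) (Icc (0:ℝ) l) x)
    (hφ'c : ContinuousOn φ' (Icc (0:ℝ) l))
    (hφ0 : φ 0 = 0) (hφl : φ l = 0)
    (u ut ux uxx uxt : ℝ → ℝ → ℝ)
    (hu : ContinuousOn (fun p : ℝ × ℝ => u p.1 p.2) (Icc (0:ℝ) l ×ˢ Icc (0:ℝ) T))
    (hutc : ContinuousOn (fun p : ℝ × ℝ => ut p.1 p.2) (Icc (0:ℝ) l ×ˢ Icc (0:ℝ) T))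
    (huxc : ContinuousOn (fun p : ℝ × ℝ => ux p.1 p.2) (Icc (0:ℝ) l ×ˢ Icc (0:ℝ) T))
    (huxxc : ContinuousOn (fun p : ℝ × ℝ => uxx p.1 p.2) (Icc (0:ℝ) l ×ˢ Icc (0:ℝ) T))
    (huxtc : ContinuousOn (fun p : ℝ × ℝ => uxt p.1 p.2) (Icc (0:ℝ) l ×ˢ Icc (0:ℝ) T))
    (hut : ∀ x ∈ Icc (0:ℝ) l, ∀ t ∈ Icc (0:ℝ) T,
      HasDerivWithinAt (fun τ => u x τ) (ut x t) (Icc (0:ℝ) T) t)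
    (hux : ∀ x ∈ Icc (0:ℝ) l, ∀ t ∈ Icc (0:ℝ) T,
      HasDerivWithinAt (fun s => u s t) (ux x t) (Icc (0:ℝ) l) x)
    (huxx : ∀ x ∈ Icc (0:ℝ) l, ∀ t ∈ Icc (0:ℝ) T,
      HasDerivWithinAt (fun s => ux s t) (uxx x t) (Icc (0:ℝ) l) x)
    (huxt : ∀ x ∈ Icc (0:ℝ) l, ∀ t ∈ Icc (0:ℝ) T,
      HasDerivWithinAt (fun τ => ux x τ) (uxt x t) (Icc (0:ℝ) T) t)
    (hL : ∀ x ∈ Icc (0:ℝ) l, ∀ t ∈ Icc (0:ℝ) T,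
      ut x t - ((a x + ε) * uxx x t + a' x * ux x t) + q x * u x t = f x t)
    (hbc : ∀ t ∈ Icc (0:ℝ) T, u 0 t = 0 ∧ u l t = 0)
    (hinit : ∀ x ∈ Icc (0:ℝ) l, u x 0 = φ x) :
    (∫ t in (0:ℝ)..T, ∫ x in (0:ℝ)..l, (ut x t) ^ 2)
      ≤ (∫ x in (0:ℝ)..l, (a x + ε) * (φ' x) ^ 2) + (∫ x in (0:ℝ)..l, q x * (φ x) ^ 2) +
        ∫ t in (0:ℝ)..T, ∫ x in (0:ℝ)..l, (f x t) ^ 2 :=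
  regularized_time_derivative_estimate_general l T ε hl hT hε a a' ha ha'c hapos q hqc hqn f hfc φ
    φ' hφ u ut ux uxx uxt hu hutc huxc huxxc huxtc hut hux huxx huxt hL hbc hinit
end

section
/- Vanishing of the degenerate flux (claim of Remark 3.3): Let a : [0,l] → ℝ be continuously differentiable with a(0) = 0 and a(x) > 0 for all x ∈ (0,l). Let u : (0,l) → ℝ be differentiable with derivative u', and suppose the function x ↦ a(x)·u'(x)² is (Lebesgue) integrable on (0,l). If the limit lim_{x→0⁺} a(x)u'(x) = k exists, then k = 0. -/
/-!
Since `a` is differentiable at `0` with `a 0 = 0`, `a x = O(x)` as `x → 0⁺`. If the flux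
`a u'` tended to `k ≠ 0`, then `a u'² = (a u')² / a` would be at least a multiple of
`1 / x` in absolute value near `0`, which is not integrable there.
-/

open Set Filter Topology Asymptotics MeasureTheory

theorem not_integrableOn_of_inv_isBigO_nhdsGT {E : Type*} [NormedAddCommGroup E] {f : ℝ → E}
    {s : Set ℝ} (hs : s ∈ 𝓝[>] 0) (hf : (fun x => x⁻¹) =O[𝓝[>] 0] f) : ¬IntegrableOn f s := by
  refine not_integrableOn_of_tendsto_norm_atTop_of_deriv_isBigO_filter (𝓝[>] 0) hs
    (f := Real.log) ?_ ?_ (by rwa [funext Real.deriv_log])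
  · filter_upwards [self_mem_nhdsWithin] with x hx
    exact Real.differentiableAt_log hx.out.ne'
  · exact tendsto_abs_atBot_atTop.comp Real.tendsto_log_nhdsGT_zero

theorem inv_isBigO_nhdsGT_mul_sq {a v : ℝ → ℝ} {k : ℝ} (hk : k ≠ 0) (ha : a =O[𝓝[>] 0] id)
    (hlim : Tendsto (fun x => a x * v x) (𝓝[>] 0) (𝓝 k)) :
    (fun x => x⁻¹) =O[𝓝[>] 0] fun x => a x * v x ^ 2 := by
  have hk2 : 0 < ‖k ^ 2‖ := norm_pos_iff.2 (pow_ne_zero 2 hk)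
  have h_one : (fun _ => (1 : ℝ)) =O[𝓝[>] 0] fun x => (a x * v x) ^ 2 :=
    (isBigO_const_left_iff_pos_le_norm one_ne_zero).2 ⟨‖k ^ 2‖ / 2, half_pos hk2,
      ((hlim.pow 2).norm.eventually (eventually_gt_nhds (half_lt_self hk2))).mono
        fun _ => le_of_lt⟩
  -- `(a v)² = a v² · a` and `a = O(x)`, so `1 = O(a v² · x)`; now divide by `x`.
  have h_one' : (fun _ => (1 : ℝ)) =O[𝓝[>] 0] fun x => a x * v x ^ 2 * x :=
    h_one.trans <| ((isBigO_refl (fun x => a x * v x ^ 2) _).mul ha).congr_left fun x => by ring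
  refine (h_one'.mul (isBigO_refl (fun x : ℝ => x⁻¹) _)).congr' ?_ ?_
  · exact .of_eq (funext fun x => one_mul _)
  · filter_upwards [self_mem_nhdsWithin] with x hx
    field_simp [hx.out.ne']

theorem degenerate_flux_vanishes_general
    (l : ℝ) (hl : 0 < l) (a u' : ℝ → ℝ) (k : ℝ)
    (haC : ContDiffOn ℝ 1 a (Icc (0:ℝ) l))
    (ha0 : a 0 = 0)
    (hint : MeasureTheory.IntegrableOn (fun x => a x * (u' x) ^ 2) (Ioo (0:ℝ) l))
    (hlim : Filter.Tendsto (fun x => a x * u' x) (nhdsWithin 0 (Ioi (0:ℝ))) (nhds k)) :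
    k = 0 := by
  by_contra hk
  have ha : a =O[𝓝[>] 0] id := by
    have h := ((haC.differentiableOn one_ne_zero) 0 (left_mem_Icc.2 hl.le)).isBigO_sub
    simp only [ha0, sub_zero] at h
    exact h.mono (nhdsWithin_le_of_mem (Icc_mem_nhdsGT hl))
  exact not_integrableOn_of_inv_isBigO_nhdsGT (Ioo_mem_nhdsGT hl)
    (inv_isBigO_nhdsGT_mul_sq hk ha hlim) hint

/-- Vanishing of the degenerate flux (Remark 3.3): if `a ∈ C¹[0,l]` with `a(0) = 0`,
`a > 0` on `(0,l)`, `u` is differentiable on `(0,l)`, `a·u'² ∈ L¹(0,l)`, and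
`a(x)u'(x) → k` as `x → 0⁺`, then `k = 0`. -/
theorem degenerate_flux_vanishes
    (l : ℝ) (hl : 0 < l) (a u u' : ℝ → ℝ) (k : ℝ)
    (haC : ContDiffOn ℝ 1 a (Icc (0:ℝ) l))
    (ha0 : a 0 = 0)
    (hapos : ∀ x ∈ Ioo (0:ℝ) l, 0 < a x)
    (hu : ∀ x ∈ Ioo (0:ℝ) l, HasDerivAt u (u' x) x)
    (hint : MeasureTheory.IntegrableOn (fun x => a x * (u' x) ^ 2) (Ioo (0:ℝ) l))
    (hlim : Filter.Tendsto (fun x => a x * u' x) (nhdsWithin 0 (Ioi (0:ℝ))) (nhds k)) :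
    k = 0 :=
  degenerate_flux_vanishes_general l hl a u' k haC ha0 hint hlim
end
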